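/- For all positive integers n, p, k with 1 ≤ p ≤ n and k ≥ 1, the generalized q-binomial coefficients satisfy the recurrence (1 - q^{n-p+1}) · (n choose p-1,k)_q − (1 - q^p) · (n choose p,k)_q = ([n]_q/[n-1]_q) · q^{p-1} · (1 - q^{n-2p+1}) · (n-1 choose p-1,k)_q, where (n choose p,k)_q = ([n]_q/[k]_q) · Σ_{r≥0} [p choose r]_q [n-p choose r]_q [n-r-1 choose k-r-1]_q q^{(n-p)p + r(r-k)}. -/
import Mathlib

set_option maxHeartbeats 2000000


open Finset

/-- The variable `q`, as a rational function over `ℚ`. -/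
noncomputable def q : RatFunc ℚ := RatFunc.X

/-- The q-integer `[m]_q = (1 - q^m)/(1 - q)`. -/
noncomputable def qint (m : ℕ) : RatFunc ℚ := (1 - q ^ m) / (1 - q)

/-- The q-integer for an integer exponent, `[x; q] = (q^x - 1)/(q - 1)`. -/
noncomputable def qintZ (x : ℤ) : RatFunc ℚ := (q ^ x - 1) / (q - 1)

/-- The q-factorial `[m]!_q`. -/
noncomputable def qfac (m : ℕ) : RatFunc ℚ := ∏ i ∈ Finset.range m, qint (i + 1)

/-- The Gaussian q-binomial coefficient `[a choose b]_q`, zero when `b < 0` or `b > a`. -/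
noncomputable def qbin (a b : ℤ) : RatFunc ℚ :=
  if 0 ≤ b ∧ b ≤ a then qfac a.toNat / (qfac b.toNat * qfac (a - b).toNat) else 0

/-- The first generalized q-binomial coefficient `(n choose p, k)_q`:
`([n]_q/[k]_q) · Σ_{r≥0} [p choose r]_q [n-p choose r]_q [n-r-1 choose k-r-1]_q
  q^{(n-p)p + r(r-k)}`. -/
noncomputable def gchoose (n p k : ℕ) : RatFunc ℚ :=
  (qint n / qint k) *
    ∑ r ∈ Finset.range (n + 1),
      qbin p r * qbin ((n : ℤ) - p) r * qbin ((n : ℤ) - r - 1) ((k : ℤ) - r - 1) *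
        q ^ (((n : ℤ) - p) * p + (r : ℤ) * ((r : ℤ) - k))


lemma hq : q ≠ 0 := RatFunc.X_ne_zero

lemma q_pow_ne_one {m : ℕ} (hm : m ≠ 0) : (q : RatFunc ℚ) ^ m ≠ 1 := by
  intro h
  have h2 : (Polynomial.X : Polynomial ℚ) ^ m = 1 := by
    apply RatFunc.algebraMap_injective ℚ
    rw [map_pow, RatFunc.algebraMap_X, map_one]
    exact h
  have := congrArg Polynomial.natDegree h2
  simp [Polynomial.natDegree_X_pow] at this
  exact hm this

lemma one_sub_q_pow_ne_zero {m : ℕ} (hm : m ≠ 0) : (1:RatFunc ℚ) - q ^ m ≠ 0 := by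
  rw [sub_ne_zero]
  exact fun h => q_pow_ne_one hm h.symm

lemma one_sub_q_ne_zero : (1:RatFunc ℚ) - q ≠ 0 := by
  simpa using one_sub_q_pow_ne_zero (m := 1) one_ne_zero

lemma one_sub_q_zpow_ne_zero {m : ℤ} (hm : m ≠ 0) : (1:RatFunc ℚ) - q ^ m ≠ 0 := by
  obtain ⟨a, rfl | rfl⟩ := m.eq_nat_or_neg
  · rw [zpow_natCast]
    exact one_sub_q_pow_ne_zero (by exact_mod_cast hm)
  · rw [zpow_neg, zpow_natCast, sub_ne_zero]
    intro h
    exact q_pow_ne_one (by simpa using hm) (inv_eq_one.mp h.symm)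

lemma qint_ne_zero {m : ℕ} (hm : m ≠ 0) : qint m ≠ 0 :=
  div_ne_zero (one_sub_q_pow_ne_zero hm) one_sub_q_ne_zero

lemma qfac_ne_zero (m : ℕ) : qfac m ≠ 0 := by
  unfold qfac
  exact Finset.prod_ne_zero_iff.mpr fun i _ => qint_ne_zero (Nat.succ_ne_zero i)

lemma one_sub_pow_eq (m : ℕ) : (1:RatFunc ℚ) - q ^ m = qint m * (1 - q) := by
  unfold qint
  rw [div_mul_cancel₀ _ one_sub_q_ne_zero]

lemma qfac_succ (m : ℕ) : qfac (m + 1) = qfac m * qint (m + 1) := Finset.prod_range_succ _ _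

lemma qfac_zero : qfac 0 = 1 := Finset.prod_range_zero _

lemma qbin_of_neg {a b : ℤ} (h : b < 0) : qbin a b = 0 := by
  unfold qbin; rw [if_neg]; omega

lemma qbin_of_lt {a b : ℤ} (h : a < b) : qbin a b = 0 := by
  unfold qbin; rw [if_neg]; omega

lemma qbin_nat (a b : ℕ) (h : b ≤ a) : qbin a b = qfac a / (qfac b * qfac (a - b)) := by
  unfold qbin
  rw [if_pos ⟨by positivity, by exact_mod_cast h⟩]
  rw [show ((a:ℤ) - b) = ((a - b : ℕ) : ℤ) by omega]
  simp

lemma qbin_self {a : ℤ} (h : 0 ≤ a) : qbin a a = 1 := by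
  lift a to ℕ using h
  rw [qbin_nat a a le_rfl]
  simp [qfac_zero, div_self (qfac_ne_zero a)]

lemma qbin_zero_right {a : ℤ} (h : 0 ≤ a) : qbin a 0 = 1 := by
  lift a to ℕ using h
  rw [show (0:ℤ) = ((0:ℕ):ℤ) by norm_num, qbin_nat a 0 (Nat.zero_le a)]
  simp [qfac_zero, div_self (qfac_ne_zero a)]

-- (A)
lemma qbin_A (a b : ℤ) : (1 - q ^ (a - b)) * qbin a b = (1 - q ^ a) * qbin (a - 1) b := by
  by_cases hb : b < 0
  · rw [qbin_of_neg hb, qbin_of_neg hb, mul_zero, mul_zero]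
  by_cases hab : a < b
  · rw [qbin_of_lt hab, qbin_of_lt (by omega : a - 1 < b), mul_zero, mul_zero]
  by_cases heq : b = a
  · subst heq
    rw [qbin_of_lt (by omega : b - 1 < b), mul_zero, sub_self, zpow_zero, sub_self, zero_mul]
  -- now 0 ≤ b < a
  push_neg at hb hab
  obtain ⟨c, rfl⟩ : ∃ c : ℕ, b = (c:ℤ) := ⟨b.toNat, by omega⟩
  obtain ⟨d, rfl⟩ : ∃ d : ℕ, a = (c:ℤ) + d + 1 := ⟨(a - c - 1).toNat, by omega⟩
  rw [show ((c:ℤ) + d + 1) - c = ((d+1:ℕ):ℤ) by push_cast; ring,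
      show ((c:ℤ) + d + 1) = ((c+d+1:ℕ):ℤ) by push_cast; ring,
      show ((c+d+1:ℕ):ℤ) - 1 = ((c+d:ℕ):ℤ) by push_cast; ring]
  rw [qbin_nat (c+d+1) c (by omega), qbin_nat (c+d) c (by omega)]
  rw [show c+d+1-c = d+1 by omega, show c+d-c = d by omega]
  rw [zpow_natCast, zpow_natCast, one_sub_pow_eq, one_sub_pow_eq,
      show c+d+1 = (c+d)+1 by ring, qfac_succ (c+d), qfac_succ d]
  have h1 := qfac_ne_zero c
  have h2 := qfac_ne_zero d
  have h3 := qfac_ne_zero (c+d)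
  have h4 := qint_ne_zero (Nat.succ_ne_zero d)
  have h5 := qint_ne_zero (Nat.succ_ne_zero (c+d))
  field_simp

-- (B)
lemma qbin_B (a b : ℤ) : (1 - q ^ b) * qbin a b = (1 - q ^ a) * qbin (a - 1) (b - 1) := by
  by_cases hb : b < 0
  · rw [qbin_of_neg hb, qbin_of_neg (by omega : b - 1 < 0), mul_zero, mul_zero]
  by_cases hb0 : b = 0
  · subst hb0
    rw [qbin_of_neg (by omega : (0:ℤ) - 1 < 0), zpow_zero, sub_self, zero_mul, mul_zero]
  by_cases hab : a < b
  · rw [qbin_of_lt hab, qbin_of_lt (by omega : a - 1 < b - 1), mul_zero, mul_zero]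
  -- 1 ≤ b ≤ a
  push_neg at hb hab
  obtain ⟨c, rfl⟩ : ∃ c : ℕ, b = (c:ℤ) + 1 := ⟨(b-1).toNat, by omega⟩
  obtain ⟨d, rfl⟩ : ∃ d : ℕ, a = (c:ℤ) + 1 + d := ⟨(a - c - 1).toNat, by omega⟩
  rw [show ((c:ℤ)+1) = ((c+1:ℕ):ℤ) by push_cast; ring,
      show ((c+1:ℕ):ℤ) + d = ((c+1+d:ℕ):ℤ) by push_cast; ring,
      show ((c+1+d:ℕ):ℤ) - 1 = ((c+d:ℕ):ℤ) by push_cast; ring,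
      show ((c+1:ℕ):ℤ) - 1 = ((c:ℕ):ℤ) by push_cast; ring]
  rw [qbin_nat (c+1+d) (c+1) (by omega), qbin_nat (c+d) c (by omega)]
  rw [show c+1+d-(c+1) = d by omega, show c+d-c = d by omega]
  rw [zpow_natCast, zpow_natCast, one_sub_pow_eq, one_sub_pow_eq,
      show c+1+d = (c+d)+1 by ring, qfac_succ (c+d), qfac_succ c]
  have h1 := qfac_ne_zero c
  have h2 := qfac_ne_zero d
  have h3 := qfac_ne_zero (c+d)
  have h4 := qint_ne_zero (Nat.succ_ne_zero c)
  have h5 := qint_ne_zero (Nat.succ_ne_zero (c+d))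
  field_simp

-- (C)
lemma qbin_C (a b : ℤ) : (1 - q ^ b) * qbin a b = (1 - q ^ (a - b + 1)) * qbin a (b - 1) := by
  by_cases hb : b < 0
  · rw [qbin_of_neg hb, qbin_of_neg (by omega : b - 1 < 0), mul_zero, mul_zero]
  by_cases hb0 : b = 0
  · subst hb0
    rw [qbin_of_neg (by omega : (0:ℤ) - 1 < 0), zpow_zero, sub_self, zero_mul, mul_zero]
  by_cases hab : a < b
  · by_cases hab1 : b = a + 1
    · rw [qbin_of_lt hab, mul_zero, show a - b + 1 = 0 by omega, zpow_zero, sub_self, zero_mul]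
    · rw [qbin_of_lt hab, qbin_of_lt (by omega : a < b - 1), mul_zero, mul_zero]
  -- 1 ≤ b ≤ a
  push_neg at hb hab
  obtain ⟨c, rfl⟩ : ∃ c : ℕ, b = (c:ℤ) + 1 := ⟨(b-1).toNat, by omega⟩
  obtain ⟨d, rfl⟩ : ∃ d : ℕ, a = (c:ℤ) + 1 + d := ⟨(a - c - 1).toNat, by omega⟩
  rw [show ((c:ℤ)+1) = ((c+1:ℕ):ℤ) by push_cast; ring,
      show ((c+1:ℕ):ℤ)+d = ((c+1+d:ℕ):ℤ) by push_cast; ring,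
      show ((c+1+d:ℕ):ℤ) - ((c+1:ℕ):ℤ) + 1 = ((d+1:ℕ):ℤ) by push_cast; ring,
      show ((c+1:ℕ):ℤ) - 1 = ((c:ℕ):ℤ) by push_cast; ring]
  rw [qbin_nat (c+1+d) (c+1) (by omega), qbin_nat (c+1+d) c (by omega)]
  rw [show c+1+d-(c+1) = d by omega, show c+1+d-c = d+1 by omega]
  rw [zpow_natCast, zpow_natCast, one_sub_pow_eq, one_sub_pow_eq, qfac_succ d, qfac_succ c]
  have h1 := qfac_ne_zero c
  have h2 := qfac_ne_zero d
  have h3 := qfac_ne_zero (c+1+d)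
  have h4 := qint_ne_zero (Nat.succ_ne_zero c)
  have h5 := qint_ne_zero (Nat.succ_ne_zero d)
  field_simp

noncomputable def Gz (n p k : ℕ) (ρ : ℤ) : RatFunc ℚ :=
  -q ^ (((n:ℤ)-p+1)*((p:ℤ)-1) + ρ*(ρ-(k:ℤ)) + ((n:ℤ)+1-ρ-ρ)) * (1 - q ^ ((n:ℤ)-p-p+1)) *
    (qbin ((p:ℤ)-1) (ρ-1) * qbin ((n:ℤ)-p) (ρ-1) * qbin ((n:ℤ)-ρ-1) ((k:ℤ)-ρ-1))

lemma TW (n p k r : ℕ) (hp : 1 ≤ p) (hpn : p ≤ n) :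
    (1 - q ^ ((n:ℤ)-p+1)) * (qbin ((p:ℤ)-1) (r:ℤ) * qbin ((n:ℤ)-p+1) (r:ℤ) *
        qbin ((n:ℤ)-r-1) ((k:ℤ)-r-1) * q ^ (((n:ℤ)-p+1)*((p:ℤ)-1) + (r:ℤ)*((r:ℤ)-(k:ℤ))))
  - (1 - q ^ ((p:ℤ))) * (qbin ((p:ℤ)) (r:ℤ) * qbin ((n:ℤ)-p) (r:ℤ) *
        qbin ((n:ℤ)-r-1) ((k:ℤ)-r-1) * q ^ ((((n:ℤ)-p+1)*((p:ℤ)-1) + (r:ℤ)*((r:ℤ)-(k:ℤ))) + ((n:ℤ)-p-p+1)))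
  - q ^ ((p:ℤ)-1) * (1 - q ^ ((n:ℤ)-p-p+1)) * (qbin ((p:ℤ)-1) (r:ℤ) * qbin ((n:ℤ)-p) (r:ℤ) *
        qbin ((n:ℤ)-r-2) ((k:ℤ)-r-1) * q ^ ((((n:ℤ)-p+1)*((p:ℤ)-1) + (r:ℤ)*((r:ℤ)-(k:ℤ))) - ((p:ℤ)-1)))
  = Gz n p k (r:ℤ) - Gz n p k ((r:ℤ)+1) := by
  unfold Gz
  rcases lt_trichotomy p r with hcase | hcase | hcase
  · -- p < r : everything vanishes
    rw [qbin_of_lt (by omega : ((p:ℤ)-1) < (r:ℤ)),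
        qbin_of_lt (by omega : ((p:ℤ)) < (r:ℤ)),
        qbin_of_lt (by omega : ((p:ℤ)-1) < (r:ℤ)-1),
        qbin_of_lt (by omega : ((p:ℤ)-1) < (r:ℤ)+1-1)]
    ring
  · -- r = p
    subst hcase
    rw [qbin_of_lt (by omega : ((p:ℤ)-1) < (p:ℤ)),
        qbin_of_lt (by omega : ((p:ℤ)-1) < (p:ℤ)+1-1),
        qbin_self (by omega : (0:ℤ) ≤ (p:ℤ)),
        qbin_self (by omega : (0:ℤ) ≤ (p:ℤ)-1)]
    have hC := qbin_C ((n:ℤ)-p) ((p:ℤ))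
    rw [show (((n:ℤ)-p+1)*((p:ℤ)-1) + (p:ℤ)*((p:ℤ)-(k:ℤ))) + ((n:ℤ)-p-p+1)
        = (((n:ℤ)-p+1)*((p:ℤ)-1) + (p:ℤ)*((p:ℤ)-(k:ℤ)) + ((n:ℤ)+1-(p:ℤ)-(p:ℤ))) from by ring]
    linear_combination (-(q ^ (((n:ℤ)-p+1)*((p:ℤ)-1) + (p:ℤ)*((p:ℤ)-(k:ℤ)) + ((n:ℤ)+1-(p:ℤ)-(p:ℤ)))) *
      qbin ((n:ℤ)-(p:ℤ)-1) ((k:ℤ)-(p:ℤ)-1)) * hC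
  · -- r < p
    rcases lt_trichotomy ((r:ℤ)) ((n:ℤ)-p+1) with hc2 | hc2 | hc2
    · -- r ≤ n-p : main region
      by_cases hn1 : n = 1
      · -- tiny case n = 1, p = 1, r = 0
        have hp1 : p = 1 := by omega
        have hr0 : r = 0 := by omega
        subst hn1; subst hp1; subst hr0
        norm_num
        ring
      · -- generic case
        have hn2 : 2 ≤ n := by omega
        have hu : (1:RatFunc ℚ) - q ^ ((p:ℤ)-(r:ℤ)) ≠ 0 := one_sub_q_zpow_ne_zero (by omega)
        have hv : (1:RatFunc ℚ) - q ^ ((n:ℤ)-p+1-r) ≠ 0 := one_sub_q_zpow_ne_zero (by omega)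
        have hw : (1:RatFunc ℚ) - q ^ ((n:ℤ)-r-1) ≠ 0 := one_sub_q_zpow_ne_zero (by omega)
        -- relation instances
        have hA1 := qbin_A ((n:ℤ)-p+1) (r:ℤ)
        rw [show (n:ℤ)-(p:ℤ)+1-1 = (n:ℤ)-(p:ℤ) from by ring] at hA1
        have hA2 := qbin_A ((p:ℤ)) (r:ℤ)
        have hA3 := qbin_A ((n:ℤ)-r-1) ((k:ℤ)-r-1)
        rw [show (n:ℤ)-(r:ℤ)-1-((k:ℤ)-(r:ℤ)-1) = (n:ℤ)-(k:ℤ) from by ring,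
            show (n:ℤ)-(r:ℤ)-1-1 = (n:ℤ)-(r:ℤ)-2 from by ring] at hA3
        have hB3 := qbin_B ((n:ℤ)-r-1) ((k:ℤ)-r-1)
        rw [show (n:ℤ)-(r:ℤ)-1-1 = (n:ℤ)-(r:ℤ)-2 from by ring,
            show (k:ℤ)-(r:ℤ)-1-1 = (k:ℤ)-(r:ℤ)-2 from by ring] at hB3
        have hC1 := qbin_C ((p:ℤ)-1) (r:ℤ)
        rw [show (p:ℤ)-1-(r:ℤ)+1 = (p:ℤ)-(r:ℤ) from by ring] at hC1
        have hC2 := qbin_C ((n:ℤ)-p) (r:ℤ)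
        rw [show (n:ℤ)-(p:ℤ)-(r:ℤ)+1 = (n:ℤ)-(p:ℤ)+1-(r:ℤ) from by ring] at hC2
        have hpne : (q:RatFunc ℚ) ^ ((p:ℤ)-1) ≠ 0 := zpow_ne_zero _ hq
        have ht3 : (q:RatFunc ℚ) ^ ((p:ℤ)-1) *
            (q ^ (((n:ℤ)-p+1)*((p:ℤ)-1) + (r:ℤ)*((r:ℤ)-(k:ℤ))) / q ^ ((p:ℤ)-1))
            = q ^ (((n:ℤ)-p+1)*((p:ℤ)-1) + (r:ℤ)*((r:ℤ)-(k:ℤ))) := by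
          field_simp
        have e1 : (q:RatFunc ℚ)^(n:ℕ) ≠ 0 := pow_ne_zero _ hq
        have e2 : (q:RatFunc ℚ)^(p:ℕ) ≠ 0 := pow_ne_zero _ hq
        have e3 : (q:RatFunc ℚ)^(r:ℕ) ≠ 0 := pow_ne_zero _ hq
        have e4 : (q:RatFunc ℚ)^(k:ℕ) ≠ 0 := pow_ne_zero _ hq
        have hBr : (1 - q ^ ((n:ℤ)-p+1))^2 * (1 - q ^ ((p:ℤ)-(r:ℤ))) * (1 - q ^ ((n:ℤ)-r-1))
            - q ^ ((n:ℤ)-p-p+1) * (1 - q ^ ((p:ℤ)))^2 * (1 - q ^ ((n:ℤ)-p+1-r)) * (1 - q ^ ((n:ℤ)-r-1))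
            - (1 - q ^ ((n:ℤ)-p-p+1)) * (1 - q ^ ((p:ℤ)-(r:ℤ))) * (1 - q ^ ((n:ℤ)-p+1-r)) * (1 - q ^ ((n:ℤ)-(k:ℤ)))
            + q ^ ((n:ℤ)+1-r-r) * (1 - q ^ ((n:ℤ)-p-p+1)) * (1 - q ^ ((n:ℤ)-r-1)) * (1 - q ^ ((r:ℤ)))^2
            - q ^ ((n:ℤ)-(k:ℤ)) * (1 - q ^ ((n:ℤ)-p-p+1)) * (1 - q ^ ((p:ℤ)-(r:ℤ))) * (1 - q ^ ((n:ℤ)-p+1-r)) * (1 - q ^ ((k:ℤ)-r-1))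
            = 0 := by
          have m1 : (q:RatFunc ℚ) ^ ((p:ℤ)) = q ^ ((p:ℤ)-(r:ℤ)) * q ^ ((r:ℤ)) := by
            rw [← zpow_add₀ hq, show (p:ℤ)-(r:ℤ)+(r:ℤ) = (p:ℤ) from by ring]
          have m2 : (q:RatFunc ℚ) ^ ((n:ℤ)-p+1) = q ^ ((n:ℤ)-p+1-r) * q ^ ((r:ℤ)) := by
            rw [← zpow_add₀ hq, show (n:ℤ)-(p:ℤ)+1-(r:ℤ)+(r:ℤ) = (n:ℤ)-(p:ℤ)+1 from by ring]
          have m5 : (q:RatFunc ℚ) ^ ((n:ℤ)+1-r-r) = q ^ ((p:ℤ)-(r:ℤ)) * q ^ ((n:ℤ)-p+1-r) := by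
            rw [← zpow_add₀ hq, show (p:ℤ)-(r:ℤ)+((n:ℤ)-(p:ℤ)+1-(r:ℤ)) = (n:ℤ)+1-(r:ℤ)-(r:ℤ) from by ring]
          have m3 : (q:RatFunc ℚ) ^ ((n:ℤ)-p-p+1) * q ^ ((p:ℤ)-(r:ℤ)) = q ^ ((n:ℤ)-p+1-r) := by
            rw [← zpow_add₀ hq, show (n:ℤ)-(p:ℤ)-(p:ℤ)+1+((p:ℤ)-(r:ℤ)) = (n:ℤ)-(p:ℤ)+1-(r:ℤ) from by ring]
          have m4 : (q:RatFunc ℚ) ^ ((n:ℤ)-(k:ℤ)) * q ^ ((k:ℤ)-r-1) = q ^ ((n:ℤ)-r-1) := by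
            rw [← zpow_add₀ hq, show (n:ℤ)-(k:ℤ)+((k:ℤ)-(r:ℤ)-1) = (n:ℤ)-(r:ℤ)-1 from by ring]
          have hM0 : ((q:RatFunc ℚ) ^ ((p:ℤ)-(r:ℤ)) * q ^ ((k:ℤ)-r-1) * q^2) ≠ 0 :=
            mul_ne_zero (mul_ne_zero (zpow_ne_zero _ hq) (zpow_ne_zero _ hq)) (pow_ne_zero _ hq)
          refine mul_left_cancel₀ hM0 ?_
          rw [mul_zero]
          linear_combination
              ((2*(q ^ ((n:ℤ)-p-p+1))*(q ^ ((p:ℤ)-(r:ℤ)))*(q ^ ((k:ℤ)-r-1))*q^2) + (-2*(q ^ ((n:ℤ)-p-p+1))*(q ^ ((p:ℤ)-(r:ℤ)))*(q ^ ((n:ℤ)-r-1))*(q ^ ((k:ℤ)-r-1))*q^2) + (-2*(q ^ ((n:ℤ)-p-p+1))*(q ^ ((p:ℤ)-(r:ℤ)))*(q ^ ((n:ℤ)-p+1-r))*(q ^ ((k:ℤ)-r-1))*q^2) + (2*(q ^ ((n:ℤ)-p-p+1))*(q ^ ((p:ℤ)-(r:ℤ)))*(q ^ ((n:ℤ)-p+1-r))*(q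 ^ ((n:ℤ)-r-1))*(q ^ ((k:ℤ)-r-1))*q^2) + (-1*(q ^ ((n:ℤ)-p-p+1))*(q ^ ((p:ℤ)-(r:ℤ)))^2*(q ^ ((k:ℤ)-r-1))*(q ^ ((r:ℤ)))*q^2) + ((q ^ ((n:ℤ)-p-p+1))*(q ^ ((p:ℤ)-(r:ℤ)))^2*(q ^ ((n:ℤ)-r-1))*(q ^ ((k:ℤ)-r-1))*(q ^ ((r:ℤ)))*q^2) + ((q ^ ((n:ℤ)-p-p+1))*(q ^ ((p:ℤ)-(r:ℤ)))^2*(q ^ ((n:ℤ)-p+1-r))*(q ^ ((k:ℤ)-r-1))*(q ^ ((r:ℤ)))*q^2) + (-1*(q ^ ((n:ℤ)-p-p+1))*(q ^ ((p:ℤ)-(r:ℤ)))^2*(q ^ ((n:ℤ)-p+1-r))*(q ^ ((n:ℤ)-r-1))*(q ^ ((k:ℤ)-r-1))*(q ^ ((r:ℤ)))*q^2) + (-1*(q ^ ((p:ℤ)))*(q ^ ((n:ℤ)-p-p+1))*(q ^ ((p:ℤ)-(r:ℤ)))*(q ^ ((k:ℤ)-r-1))*q^2) + ((q ^ ((p:ℤ)))*(q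 ^ ((n:ℤ)-p-p+1))*(q ^ ((p:ℤ)-(r:ℤ)))*(q ^ ((n:ℤ)-r-1))*(q ^ ((k:ℤ)-r-1))*q^2) + ((q ^ ((p:ℤ)))*(q ^ ((n:ℤ)-p-p+1))*(q ^ ((p:ℤ)-(r:ℤ)))*(q ^ ((n:ℤ)-p+1-r))*(q ^ ((k:ℤ)-r-1))*q^2) + (-1*(q ^ ((p:ℤ)))*(q ^ ((n:ℤ)-p-p+1))*(q ^ ((p:ℤ)-(r:ℤ)))*(q ^ ((n:ℤ)-p+1-r))*(q ^ ((n:ℤ)-r-1))*(q ^ ((k:ℤ)-r-1))*q^2)) * m1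
            + ((-2*(q ^ ((p:ℤ)-(r:ℤ)))*(q ^ ((k:ℤ)-r-1))*q^2) + (2*(q ^ ((p:ℤ)-(r:ℤ)))*(q ^ ((n:ℤ)-r-1))*(q ^ ((k:ℤ)-r-1))*q^2) + ((q ^ ((p:ℤ)-(r:ℤ)))*(q ^ ((n:ℤ)-p+1-r))*(q ^ ((k:ℤ)-r-1))*(q ^ ((r:ℤ)))*q^2) + (-1*(q ^ ((p:ℤ)-(r:ℤ)))*(q ^ ((n:ℤ)-p+1-r))*(q ^ ((n:ℤ)-r-1))*(q ^ ((k:ℤ)-r-1))*(q ^ ((r:ℤ)))*q^2) + (2*(q ^ ((p:ℤ)-(r:ℤ)))^2*(q ^ ((k:ℤ)-r-1))*q^2) + (-2*(q ^ ((p:ℤ)-(r:ℤ)))^2*(q ^ ((n:ℤ)-r-1))*(q ^ ((k:ℤ)-r-1))*q^2) + (-1*(q ^ ((p:ℤ)-(r:ℤ)))^2*(q ^ ((n:ℤ)-p+1-r))*(q ^ ((k:ℤ)-r-1))*(q ^ ((r:ℤ)))*q^2) + ((q ^ ((p:ℤ)-(r:ℤ)))^2*(q ^ ((n:ℤ)-p+1-r))*(q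 ^ ((n:ℤ)-r-1))*(q ^ ((k:ℤ)-r-1))*(q ^ ((r:ℤ)))*q^2) + ((q ^ ((n:ℤ)-p+1))*(q ^ ((p:ℤ)-(r:ℤ)))*(q ^ ((k:ℤ)-r-1))*q^2) + (-1*(q ^ ((n:ℤ)-p+1))*(q ^ ((p:ℤ)-(r:ℤ)))*(q ^ ((n:ℤ)-r-1))*(q ^ ((k:ℤ)-r-1))*q^2) + (-1*(q ^ ((n:ℤ)-p+1))*(q ^ ((p:ℤ)-(r:ℤ)))^2*(q ^ ((k:ℤ)-r-1))*q^2) + ((q ^ ((n:ℤ)-p+1))*(q ^ ((p:ℤ)-(r:ℤ)))^2*(q ^ ((n:ℤ)-r-1))*(q ^ ((k:ℤ)-r-1))*q^2)) * m2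
            + (((q ^ ((p:ℤ)-(r:ℤ)))*(q ^ ((k:ℤ)-r-1))*q^2) + (-2*(q ^ ((p:ℤ)-(r:ℤ)))*(q ^ ((k:ℤ)-r-1))*(q ^ ((r:ℤ)))*q^2) + ((q ^ ((p:ℤ)-(r:ℤ)))*(q ^ ((k:ℤ)-r-1))*(q ^ ((r:ℤ)))^2*q^2) + (-1*(q ^ ((p:ℤ)-(r:ℤ)))*(q ^ ((n:ℤ)-r-1))*(q ^ ((k:ℤ)-r-1))*q^2) + (2*(q ^ ((p:ℤ)-(r:ℤ)))*(q ^ ((n:ℤ)-r-1))*(q ^ ((k:ℤ)-r-1))*(q ^ ((r:ℤ)))*q^2) + (-1*(q ^ ((p:ℤ)-(r:ℤ)))*(q ^ ((n:ℤ)-r-1))*(q ^ ((k:ℤ)-r-1))*(q ^ ((r:ℤ)))^2*q^2) + (-1*(q ^ ((n:ℤ)-p-p+1))*(q ^ ((p:ℤ)-(r:ℤ)))*(q ^ ((k:ℤ)-r-1))*q^2) + (2*(q ^ ((n:ℤ)-p-p+1))*(q ^ ((p:ℤ)-(r:ℤ)))*(q ^ ((k:ℤ)-r-1))*(q ^ ((r:ℤ)))*q^2)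 + (-1*(q ^ ((n:ℤ)-p-p+1))*(q ^ ((p:ℤ)-(r:ℤ)))*(q ^ ((k:ℤ)-r-1))*(q ^ ((r:ℤ)))^2*q^2) + ((q ^ ((n:ℤ)-p-p+1))*(q ^ ((p:ℤ)-(r:ℤ)))*(q ^ ((n:ℤ)-r-1))*(q ^ ((k:ℤ)-r-1))*q^2) + (-2*(q ^ ((n:ℤ)-p-p+1))*(q ^ ((p:ℤ)-(r:ℤ)))*(q ^ ((n:ℤ)-r-1))*(q ^ ((k:ℤ)-r-1))*(q ^ ((r:ℤ)))*q^2) + ((q ^ ((n:ℤ)-p-p+1))*(q ^ ((p:ℤ)-(r:ℤ)))*(q ^ ((n:ℤ)-r-1))*(q ^ ((k:ℤ)-r-1))*(q ^ ((r:ℤ)))^2*q^2)) * m5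
            + ((-1*(q ^ ((n:ℤ)-(k:ℤ)))*(q ^ ((k:ℤ)-r-1))^2*q^2) + ((q ^ ((n:ℤ)-r-1))*(q ^ ((k:ℤ)-r-1))*q^2) + ((q ^ ((n:ℤ)-p+1-r))*(q ^ ((n:ℤ)-(k:ℤ)))*(q ^ ((k:ℤ)-r-1))^2*q^2) + (-1*(q ^ ((n:ℤ)-p+1-r))*(q ^ ((n:ℤ)-r-1))*(q ^ ((k:ℤ)-r-1))*q^2) + (-1*(q ^ ((p:ℤ)-(r:ℤ)))*(q ^ ((k:ℤ)-r-1))*q^2) + (2*(q ^ ((p:ℤ)-(r:ℤ)))*(q ^ ((k:ℤ)-r-1))*(q ^ ((r:ℤ)))*q^2) + ((q ^ ((p:ℤ)-(r:ℤ)))*(q ^ ((n:ℤ)-(k:ℤ)))*(q ^ ((k:ℤ)-r-1))^2*q^2) + (-2*(q ^ ((p:ℤ)-(r:ℤ)))*(q ^ ((n:ℤ)-r-1))*(q ^ ((k:ℤ)-r-1))*(q ^ ((r:ℤ)))*q^2) + (-1*(q ^ ((p:ℤ)-(r:ℤ)))*(q ^ ((n:ℤ)-p+1-r))*(q ^ ((k:ℤ)-r-1))*(q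 ^ ((r:ℤ)))^2*q^2) + (-1*(q ^ ((p:ℤ)-(r:ℤ)))*(q ^ ((n:ℤ)-p+1-r))*(q ^ ((n:ℤ)-(k:ℤ)))*(q ^ ((k:ℤ)-r-1))^2*q^2) + ((q ^ ((p:ℤ)-(r:ℤ)))*(q ^ ((n:ℤ)-p+1-r))*(q ^ ((n:ℤ)-r-1))*(q ^ ((k:ℤ)-r-1))*q^2) + ((q ^ ((p:ℤ)-(r:ℤ)))*(q ^ ((n:ℤ)-p+1-r))*(q ^ ((n:ℤ)-r-1))*(q ^ ((k:ℤ)-r-1))*(q ^ ((r:ℤ)))^2*q^2) + (-1*(q ^ ((p:ℤ)-(r:ℤ)))^2*(q ^ ((k:ℤ)-r-1))*(q ^ ((r:ℤ)))^2*q^2) + ((q ^ ((p:ℤ)-(r:ℤ)))^2*(q ^ ((n:ℤ)-r-1))*(q ^ ((k:ℤ)-r-1))*(q ^ ((r:ℤ)))^2*q^2) + ((q ^ ((p:ℤ)-(r:ℤ)))^2*(q ^ ((n:ℤ)-p+1-r))*(q ^ ((k:ℤ)-r-1))*(q ^ ((r:ℤ)))^2*q^2) + (-1*(q ^ ((p:ℤ)-(r:ℤ)))^2*(q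 ^ ((n:ℤ)-p+1-r))*(q ^ ((n:ℤ)-r-1))*(q ^ ((k:ℤ)-r-1))*(q ^ ((r:ℤ)))^2*q^2)) * m3
            + ((-1*(q ^ ((n:ℤ)-p+1-r))*(q ^ ((k:ℤ)-r-1))*q^2) + ((q ^ ((n:ℤ)-p+1-r))^2*(q ^ ((k:ℤ)-r-1))*q^2) + ((q ^ ((p:ℤ)-(r:ℤ)))*(q ^ ((k:ℤ)-r-1))*q^2) + (-1*(q ^ ((p:ℤ)-(r:ℤ)))*(q ^ ((n:ℤ)-p+1-r))^2*(q ^ ((k:ℤ)-r-1))*q^2) + (-1*(q ^ ((p:ℤ)-(r:ℤ)))^2*(q ^ ((k:ℤ)-r-1))*q^2) + ((q ^ ((p:ℤ)-(r:ℤ)))^2*(q ^ ((n:ℤ)-p+1-r))*(q ^ ((k:ℤ)-r-1))*q^2)) * m4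
        -- normalize Gz (r+1) arguments and split exponents
        rw [show (r:ℤ)+1-1 = (r:ℤ) from by ring,
            show (n:ℤ)-((r:ℤ)+1)-1 = (n:ℤ)-(r:ℤ)-2 from by ring,
            show (k:ℤ)-((r:ℤ)+1)-1 = (k:ℤ)-(r:ℤ)-2 from by ring,
            show ((n:ℤ)-p+1)*((p:ℤ)-1) + ((r:ℤ)+1)*((r:ℤ)+1-(k:ℤ)) + ((n:ℤ)+1-((r:ℤ)+1)-((r:ℤ)+1))
              = (((n:ℤ)-p+1)*((p:ℤ)-1) + (r:ℤ)*((r:ℤ)-(k:ℤ))) + ((n:ℤ)-(k:ℤ)) from by ring]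
        rw [zpow_add₀ hq (((n:ℤ)-p+1)*((p:ℤ)-1) + (r:ℤ)*((r:ℤ)-(k:ℤ))) ((n:ℤ)-(p:ℤ)-(p:ℤ)+1),
            zpow_sub₀ hq (((n:ℤ)-p+1)*((p:ℤ)-1) + (r:ℤ)*((r:ℤ)-(k:ℤ))) ((p:ℤ)-1),
            zpow_add₀ hq (((n:ℤ)-p+1)*((p:ℤ)-1) + (r:ℤ)*((r:ℤ)-(k:ℤ))) ((n:ℤ)+1-(r:ℤ)-(r:ℤ)),
            zpow_add₀ hq (((n:ℤ)-p+1)*((p:ℤ)-1) + (r:ℤ)*((r:ℤ)-(k:ℤ))) ((n:ℤ)-(k:ℤ))]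
        refine mul_left_cancel₀ (mul_ne_zero (mul_ne_zero hu hv) hw) ?_
        linear_combination
            (q ^ (((n:ℤ)-p+1)*((p:ℤ)-1) + (r:ℤ)*((r:ℤ)-(k:ℤ))) * qbin ((p:ℤ)-1) (r:ℤ) *
              qbin ((n:ℤ)-p) (r:ℤ) * qbin ((n:ℤ)-r-1) ((k:ℤ)-r-1)) * hBr
          + ((1 - q ^ ((n:ℤ)-p+1)) * (1 - q ^ ((p:ℤ)-(r:ℤ))) * (1 - q ^ ((n:ℤ)-r-1)) *
              q ^ (((n:ℤ)-p+1)*((p:ℤ)-1) + (r:ℤ)*((r:ℤ)-(k:ℤ))) * qbin ((p:ℤ)-1) (r:ℤ) *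
              qbin ((n:ℤ)-r-1) ((k:ℤ)-r-1)) * hA1
          - ((1 - q ^ ((p:ℤ))) * (1 - q ^ ((n:ℤ)-p+1-r)) * (1 - q ^ ((n:ℤ)-r-1)) *
              q ^ (((n:ℤ)-p+1)*((p:ℤ)-1) + (r:ℤ)*((r:ℤ)-(k:ℤ))) * q ^ ((n:ℤ)-(p:ℤ)-(p:ℤ)+1) *
              qbin ((n:ℤ)-p) (r:ℤ) * qbin ((n:ℤ)-r-1) ((k:ℤ)-r-1)) * hA2
          - ((1 - q ^ ((n:ℤ)-p-p+1)) * (1 - q ^ ((p:ℤ)-(r:ℤ))) * (1 - q ^ ((n:ℤ)-p+1-r)) *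
              (1 - q ^ ((n:ℤ)-r-1)) * qbin ((p:ℤ)-1) (r:ℤ) * qbin ((n:ℤ)-p) (r:ℤ) *
              qbin ((n:ℤ)-r-2) ((k:ℤ)-r-1)) * ht3
          + ((1 - q ^ ((n:ℤ)-p-p+1)) * (1 - q ^ ((p:ℤ)-(r:ℤ))) * (1 - q ^ ((n:ℤ)-p+1-r)) *
              q ^ (((n:ℤ)-p+1)*((p:ℤ)-1) + (r:ℤ)*((r:ℤ)-(k:ℤ))) * qbin ((p:ℤ)-1) (r:ℤ) *
              qbin ((n:ℤ)-p) (r:ℤ)) * hA3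
          - (q ^ (((n:ℤ)-p+1)*((p:ℤ)-1) + (r:ℤ)*((r:ℤ)-(k:ℤ))) * q ^ ((n:ℤ)+1-(r:ℤ)-(r:ℤ)) *
              (1 - q ^ ((n:ℤ)-p-p+1)) * (1 - q ^ ((n:ℤ)-r-1)) * qbin ((n:ℤ)-r-1) ((k:ℤ)-r-1) *
              (1 - q ^ ((n:ℤ)-p+1-r)) * qbin ((n:ℤ)-p) ((r:ℤ)-1)) * hC1
          - (q ^ (((n:ℤ)-p+1)*((p:ℤ)-1) + (r:ℤ)*((r:ℤ)-(k:ℤ))) * q ^ ((n:ℤ)+1-(r:ℤ)-(r:ℤ)) *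
              (1 - q ^ ((n:ℤ)-p-p+1)) * (1 - q ^ ((n:ℤ)-r-1)) * (1 - q ^ ((r:ℤ))) *
              qbin ((p:ℤ)-1) (r:ℤ) * qbin ((n:ℤ)-r-1) ((k:ℤ)-r-1)) * hC2
          + (q ^ (((n:ℤ)-p+1)*((p:ℤ)-1) + (r:ℤ)*((r:ℤ)-(k:ℤ))) * q ^ ((n:ℤ)-(k:ℤ)) *
              (1 - q ^ ((n:ℤ)-p-p+1)) * (1 - q ^ ((p:ℤ)-(r:ℤ))) * (1 - q ^ ((n:ℤ)-p+1-r)) *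
              qbin ((p:ℤ)-1) (r:ℤ) * qbin ((n:ℤ)-p) (r:ℤ)) * hB3
    · -- r = n - p + 1
      rw [qbin_of_lt (by omega : (n:ℤ)-(p:ℤ) < (r:ℤ)),
          qbin_of_lt (by omega : (n:ℤ)-(p:ℤ) < (r:ℤ)+1-1)]
      have h1 : qbin ((n:ℤ)-p+1) (r:ℤ) = 1 := by
        rw [← hc2]; exact qbin_self (by omega)
      have h2 : qbin ((n:ℤ)-p) ((r:ℤ)-1) = 1 := by
        rw [show (r:ℤ)-1 = (n:ℤ)-(p:ℤ) from by omega]; exact qbin_self (by omega)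
      rw [h1, h2]
      have hC := qbin_C ((p:ℤ)-1) (r:ℤ)
      rw [show (p:ℤ)-1-(r:ℤ)+1 = (n:ℤ)+1-(r:ℤ)-(r:ℤ) from by omega] at hC
      have hsplit : (q:RatFunc ℚ) ^ (((n:ℤ)-p+1)*((p:ℤ)-1) + (r:ℤ)*((r:ℤ)-(k:ℤ)) + ((n:ℤ)+1-(r:ℤ)-(r:ℤ)))
          = q ^ (((n:ℤ)-p+1)*((p:ℤ)-1) + (r:ℤ)*((r:ℤ)-(k:ℤ))) * q ^ ((n:ℤ)+1-(r:ℤ)-(r:ℤ)) :=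
        zpow_add₀ hq _ _
      have hpow : (q:RatFunc ℚ) ^ ((n:ℤ)+1-(r:ℤ)-(r:ℤ)) * q ^ ((n:ℤ)-p-p+1) = 1 := by
        rw [← zpow_add₀ hq, show ((n:ℤ)+1-(r:ℤ)-(r:ℤ)) + ((n:ℤ)-p-p+1) = 0 from by omega, zpow_zero]
      rw [hsplit]
      have hq2 : (q:RatFunc ℚ) ^ ((n:ℤ)-(p:ℤ)+1) = q ^ ((r:ℤ)) := by rw [hc2]
      linear_combination (qbin ((n:ℤ)-(r:ℤ)-1) ((k:ℤ)-(r:ℤ)-1) *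
          q ^ (((n:ℤ)-p+1)*((p:ℤ)-1) + (r:ℤ)*((r:ℤ)-(k:ℤ)))) * hC
        - (qbin ((n:ℤ)-(r:ℤ)-1) ((k:ℤ)-(r:ℤ)-1) * qbin ((p:ℤ)-1) ((r:ℤ)-1) *
          q ^ (((n:ℤ)-p+1)*((p:ℤ)-1) + (r:ℤ)*((r:ℤ)-(k:ℤ)))) * hpow
        - (qbin ((p:ℤ)-1) (r:ℤ) * qbin ((n:ℤ)-(r:ℤ)-1) ((k:ℤ)-(r:ℤ)-1) *
          q ^ (((n:ℤ)-p+1)*((p:ℤ)-1) + (r:ℤ)*((r:ℤ)-(k:ℤ)))) * hq2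
    · -- n - p + 1 < r : everything vanishes
      rw [qbin_of_lt (by omega : (n:ℤ)-(p:ℤ)+1 < (r:ℤ)),
          qbin_of_lt (by omega : (n:ℤ)-(p:ℤ) < (r:ℤ)),
          qbin_of_lt (by omega : (n:ℤ)-(p:ℤ) < (r:ℤ)-1),
          qbin_of_lt (by omega : (n:ℤ)-(p:ℤ) < (r:ℤ)+1-1)]
      ring

lemma Gz_zero (n p k : ℕ) : Gz n p k ((0:ℕ):ℤ) = 0 := by
  unfold Gz
  rw [qbin_of_neg (show ((0:ℕ):ℤ)-1 < 0 by norm_num)]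
  ring

lemma Gz_top (n p k : ℕ) (hp : 1 ≤ p) : Gz n p k (((n+1:ℕ)):ℤ) = 0 := by
  unfold Gz
  rw [qbin_of_lt (show (n:ℤ)-p < ((n+1:ℕ):ℤ)-1 by push_cast; omega)]
  ring

lemma SL (n p k : ℕ) (hp : 1 ≤ p) (hpn : p ≤ n) :
    (1 - q ^ ((n:ℤ)-p+1)) * (∑ r ∈ Finset.range (n+1), qbin ((p:ℤ)-1) (r:ℤ) * qbin ((n:ℤ)-p+1) (r:ℤ) *
        qbin ((n:ℤ)-r-1) ((k:ℤ)-r-1) * q ^ (((n:ℤ)-p+1)*((p:ℤ)-1) + (r:ℤ)*((r:ℤ)-(k:ℤ))))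
  - (1 - q ^ ((p:ℤ))) * (∑ r ∈ Finset.range (n+1), qbin ((p:ℤ)) (r:ℤ) * qbin ((n:ℤ)-p) (r:ℤ) *
        qbin ((n:ℤ)-r-1) ((k:ℤ)-r-1) * q ^ ((((n:ℤ)-p+1)*((p:ℤ)-1) + (r:ℤ)*((r:ℤ)-(k:ℤ))) + ((n:ℤ)-p-p+1)))
  = (q ^ ((p:ℤ)-1) * (1 - q ^ ((n:ℤ)-p-p+1))) * (∑ r ∈ Finset.range (n+1), qbin ((p:ℤ)-1) (r:ℤ) * qbin ((n:ℤ)-p) (r:ℤ) *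
        qbin ((n:ℤ)-r-2) ((k:ℤ)-r-1) * q ^ ((((n:ℤ)-p+1)*((p:ℤ)-1) + (r:ℤ)*((r:ℤ)-(k:ℤ))) - ((p:ℤ)-1))) := by
  rw [Finset.mul_sum, Finset.mul_sum, Finset.mul_sum, ← sub_eq_zero,
      ← Finset.sum_sub_distrib, ← Finset.sum_sub_distrib]
  have key : ∀ r : ℕ,
      (1 - q ^ ((n:ℤ)-p+1)) * (qbin ((p:ℤ)-1) (r:ℤ) * qbin ((n:ℤ)-p+1) (r:ℤ) *
          qbin ((n:ℤ)-r-1) ((k:ℤ)-r-1) * q ^ (((n:ℤ)-p+1)*((p:ℤ)-1) + (r:ℤ)*((r:ℤ)-(k:ℤ))))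
    - (1 - q ^ ((p:ℤ))) * (qbin ((p:ℤ)) (r:ℤ) * qbin ((n:ℤ)-p) (r:ℤ) *
          qbin ((n:ℤ)-r-1) ((k:ℤ)-r-1) * q ^ ((((n:ℤ)-p+1)*((p:ℤ)-1) + (r:ℤ)*((r:ℤ)-(k:ℤ))) + ((n:ℤ)-p-p+1)))
    - q ^ ((p:ℤ)-1) * (1 - q ^ ((n:ℤ)-p-p+1)) * (qbin ((p:ℤ)-1) (r:ℤ) * qbin ((n:ℤ)-p) (r:ℤ) *
          qbin ((n:ℤ)-r-2) ((k:ℤ)-r-1) * q ^ ((((n:ℤ)-p+1)*((p:ℤ)-1) + (r:ℤ)*((r:ℤ)-(k:ℤ))) - ((p:ℤ)-1)))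
      = Gz n p k (r:ℤ) - Gz n p k ((r:ℤ)+1) :=
    fun r => by linear_combination TW n p k r hp hpn
  rw [Finset.sum_congr rfl (fun r _ => key r)]
  have h2 : ∑ r ∈ Finset.range (n+1), (Gz n p k (r:ℤ) - Gz n p k ((r:ℤ)+1))
      = Gz n p k ((0:ℕ):ℤ) - Gz n p k (((n+1:ℕ)):ℤ) := by
    have h3 := Finset.sum_range_sub' (f := fun i : ℕ => Gz n p k (i:ℤ)) (n := n+1)
    simpa using h3
  rw [h2, Gz_zero, Gz_top n p k hp, sub_self]


theorem gchoose_recurrence (n p k : ℕ) (hp : 1 ≤ p) (hpn : p ≤ n) (hk : 1 ≤ k) :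
    (1 - q ^ ((n : ℤ) - p + 1)) * gchoose n (p - 1) k - (1 - q ^ (p : ℕ)) * gchoose n p k =
      (qint n / qint (n - 1)) * q ^ ((p : ℤ) - 1) * (1 - q ^ ((n : ℤ) - 2 * p + 1)) *
        gchoose (n - 1) (p - 1) k := by
  have hc1 : ((p-1:ℕ):ℤ) = (p:ℤ)-1 := by omega
  have hc2 : ((n-1:ℕ):ℤ) = (n:ℤ)-1 := by omega
  rw [← zpow_natCast q p, show (n:ℤ)-2*p+1 = (n:ℤ)-p-p+1 from by ring]
  simp only [gchoose, hc1, hc2, show n-1+1 = n from by omega]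
  -- normalize the three sums
  have e1 : ∑ r ∈ Finset.range (n+1), qbin ((p:ℤ)-1) (r:ℤ) * qbin ((n:ℤ)-((p:ℤ)-1)) (r:ℤ) *
        qbin ((n:ℤ)-r-1) ((k:ℤ)-r-1) * q ^ (((n:ℤ)-((p:ℤ)-1))*((p:ℤ)-1) + (r:ℤ)*((r:ℤ)-(k:ℤ)))
      = ∑ r ∈ Finset.range (n+1), qbin ((p:ℤ)-1) (r:ℤ) * qbin ((n:ℤ)-p+1) (r:ℤ) *
        qbin ((n:ℤ)-r-1) ((k:ℤ)-r-1) * q ^ (((n:ℤ)-p+1)*((p:ℤ)-1) + (r:ℤ)*((r:ℤ)-(k:ℤ))) :=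
    Finset.sum_congr rfl (fun r _ => by
      rw [show (n:ℤ)-((p:ℤ)-1) = (n:ℤ)-(p:ℤ)+1 from by ring])
  have e2 : ∑ r ∈ Finset.range (n+1), qbin ((p:ℤ)) (r:ℤ) * qbin ((n:ℤ)-p) (r:ℤ) *
        qbin ((n:ℤ)-r-1) ((k:ℤ)-r-1) * q ^ (((n:ℤ)-p)*(p:ℤ) + (r:ℤ)*((r:ℤ)-(k:ℤ)))
      = ∑ r ∈ Finset.range (n+1), qbin ((p:ℤ)) (r:ℤ) * qbin ((n:ℤ)-p) (r:ℤ) *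
        qbin ((n:ℤ)-r-1) ((k:ℤ)-r-1) * q ^ ((((n:ℤ)-p+1)*((p:ℤ)-1) + (r:ℤ)*((r:ℤ)-(k:ℤ))) + ((n:ℤ)-p-p+1)) :=
    Finset.sum_congr rfl (fun r _ => by
      rw [show ((n:ℤ)-p)*(p:ℤ) + (r:ℤ)*((r:ℤ)-(k:ℤ))
        = (((n:ℤ)-p+1)*((p:ℤ)-1) + (r:ℤ)*((r:ℤ)-(k:ℤ))) + ((n:ℤ)-p-p+1) from by ring])
  have e3 : ∑ r ∈ Finset.range n, qbin ((p:ℤ)-1) (r:ℤ) * qbin ((n:ℤ)-1-((p:ℤ)-1)) (r:ℤ) *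
        qbin ((n:ℤ)-1-r-1) ((k:ℤ)-r-1) * q ^ (((n:ℤ)-1-((p:ℤ)-1))*((p:ℤ)-1) + (r:ℤ)*((r:ℤ)-(k:ℤ)))
      = ∑ r ∈ Finset.range n, qbin ((p:ℤ)-1) (r:ℤ) * qbin ((n:ℤ)-p) (r:ℤ) *
        qbin ((n:ℤ)-r-2) ((k:ℤ)-r-1) * q ^ ((((n:ℤ)-p+1)*((p:ℤ)-1) + (r:ℤ)*((r:ℤ)-(k:ℤ))) - ((p:ℤ)-1)) :=
    Finset.sum_congr rfl (fun r _ => by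
      rw [show (n:ℤ)-1-((p:ℤ)-1) = (n:ℤ)-(p:ℤ) from by ring,
          show (n:ℤ)-1-(r:ℤ)-1 = (n:ℤ)-(r:ℤ)-2 from by ring,
          show ((n:ℤ)-p)*((p:ℤ)-1) + (r:ℤ)*((r:ℤ)-(k:ℤ))
            = (((n:ℤ)-p+1)*((p:ℤ)-1) + (r:ℤ)*((r:ℤ)-(k:ℤ))) - ((p:ℤ)-1) from by ring])
  rw [e1, e2, e3]
  have hext : ∑ r ∈ Finset.range (n+1), qbin ((p:ℤ)-1) (r:ℤ) * qbin ((n:ℤ)-p) (r:ℤ) *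
        qbin ((n:ℤ)-r-2) ((k:ℤ)-r-1) * q ^ ((((n:ℤ)-p+1)*((p:ℤ)-1) + (r:ℤ)*((r:ℤ)-(k:ℤ))) - ((p:ℤ)-1))
      = ∑ r ∈ Finset.range n, qbin ((p:ℤ)-1) (r:ℤ) * qbin ((n:ℤ)-p) (r:ℤ) *
        qbin ((n:ℤ)-r-2) ((k:ℤ)-r-1) * q ^ ((((n:ℤ)-p+1)*((p:ℤ)-1) + (r:ℤ)*((r:ℤ)-(k:ℤ))) - ((p:ℤ)-1)) := by
    rw [Finset.sum_range_succ, qbin_of_lt (show (n:ℤ)-p < ((n:ℕ):ℤ) by omega)]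
    ring
  have hS := SL n p k hp hpn
  rw [hext] at hS
  have hK : qint k ≠ 0 := qint_ne_zero (by omega)
  by_cases hn1 : n = 1
  · subst hn1
    have hp1 : p = 1 := by omega
    subst hp1
    norm_num at hS ⊢
    linear_combination (qint 1 / qint k) * hS
  · have hM : qint (n-1) ≠ 0 := qint_ne_zero (by omega)
    have heq : qint ↑n / qint (n-1) * (qint (n-1) / qint k) = qint n / qint k := by
      field_simp
    have hMM : qint (n-1) * (qint (n-1))⁻¹ = 1 := mul_inv_cancel₀ hM
    linear_combination (qint n / qint k) * hS
      + ((q ^ ((p:ℤ)-1) * (1 - q ^ ((n:ℤ)-p-p+1))) * (∑ r ∈ Finset.range n, qbin ((p:ℤ)-1) (r:ℤ) * qbin ((n:ℤ)-p) (r:ℤ) *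
          qbin ((n:ℤ)-r-2) ((k:ℤ)-r-1) * q ^ ((((n:ℤ)-p+1)*((p:ℤ)-1) + (r:ℤ)*((r:ℤ)-(k:ℤ))) - ((p:ℤ)-1)))) * heq
      + (2 * (qint n * (qint k)⁻¹ * q ^ ((p:ℤ)-1) * q ^ ((n:ℤ)-p-p+1) * (∑ r ∈ Finset.range n, qbin ((p:ℤ)-1) (r:ℤ) * qbin ((n:ℤ)-p) (r:ℤ) *
          qbin ((n:ℤ)-r-2) ((k:ℤ)-r-1) * q ^ ((((n:ℤ)-p+1)*((p:ℤ)-1) + (r:ℤ)*((r:ℤ)-(k:ℤ))) - ((p:ℤ)-1))))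
        - 2 * (qint n * (qint k)⁻¹ * q ^ ((p:ℤ)-1) * (∑ r ∈ Finset.range n, qbin ((p:ℤ)-1) (r:ℤ) * qbin ((n:ℤ)-p) (r:ℤ) *
          qbin ((n:ℤ)-r-2) ((k:ℤ)-r-1) * q ^ ((((n:ℤ)-p+1)*((p:ℤ)-1) + (r:ℤ)*((r:ℤ)-(k:ℤ))) - ((p:ℤ)-1))))) * hMM
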